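/- Let L₁ and L₂ be two distinct rooted trees each with ℓ vertices. For a rooted tree T and vertex v, the maximal limb at v is the rooted subtree consisting of v and all of its descendants. Then for every n, the number of n-vertex rooted trees not containing L₁ as a maximal limb equals the number of n-vertex rooted trees not containing L₂ as a maximal limb. -/

import Mathlib

/-- A rooted tree: a root together with a list of rooted subtrees
(the list order is quotiented out by `Iso` below). -/
inductive RTree : Type
  | node : List RTree → RTree

mutual
  /-- The number of vertices of a rooted tree. -/
  def RTree.size : RTree → ℕ
    | .node c => 1 + RTree.sizeList c
  def RTree.sizeList : List RTree → ℕ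
    | [] => 0
    | t :: ts => RTree.size t + RTree.sizeList ts
end

mutual
  /-- Isomorphism of rooted trees: the children correspond up to isomorphism
  and permutation. -/
  inductive RTree.Iso : RTree → RTree → Prop
    | node (c c' l : List RTree) :
        l.Perm c' → RTree.IsoList c l → RTree.Iso (.node c) (.node c')
  inductive RTree.IsoList : List RTree → List RTree → Prop
    | nil : RTree.IsoList [] []
    | cons {t t' : RTree} {ts ts' : List RTree} :
        RTree.Iso t t' → RTree.IsoList ts ts' → RTree.IsoList (t :: ts) (t' :: ts')
end

/-- `HasMaxLimb T L` says that the rooted tree `T` contains `L` as a maximal limb: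
the full subtree rooted at some vertex of `T` (that vertex together with all of its
descendants) is isomorphic to `L`. -/
inductive HasMaxLimb : RTree → RTree → Prop
  | here (t L : RTree) : RTree.Iso t L → HasMaxLimb t L
  | child (c : List RTree) (t L : RTree) :
      t ∈ c → HasMaxLimb t L → HasMaxLimb (.node c) L


/-!
Pass to isomorphism classes of rooted trees (`UTree`). A class is determined by the multiset of
the classes of its children, and every multiset arises (`UTree.childrenEquiv`). A tree avoids `L`
as a maximal limb iff it is not `L` and all its children avoid `L`. Hence the trees of size `n`
whose children all avoid `L` are the `L`-avoiding trees of size `n`, together with `L` itself when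
`n = |L|` (the children of `L` are too small to contain `L`). On the other hand they correspond to
multisets of `L`-avoiding trees of total size `n - 1`, whose number only depends on the numbers of
`L`-avoiding trees of each size `< n`. Strong induction on `n` then shows that the number of
`L`-avoiding trees of size `n` depends only on `|L|`.
-/

namespace RTree

theorem forall₂_of_isoList : ∀ {l l' : List RTree}, IsoList l l' → List.Forall₂ Iso l l'
  | _, _, .nil => .nil
  | _, _, .cons h hs => .cons h (forall₂_of_isoList hs)

theorem isoList_of_forall₂ : ∀ {l l' : List RTree}, List.Forall₂ Iso l l' → IsoList l l'
  | _, _, .nil => .nil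
  | _, _, .cons h hs => .cons h (isoList_of_forall₂ hs)

theorem isoList_iff_forall₂ {l l' : List RTree} : IsoList l l' ↔ List.Forall₂ Iso l l' :=
  ⟨forall₂_of_isoList, isoList_of_forall₂⟩

mutual
theorem Iso.refl : ∀ t : RTree, Iso t t
  | .node c => .node c c c (.refl c) (IsoList.refl c)
theorem IsoList.refl : ∀ l : List RTree, IsoList l l
  | [] => .nil
  | t :: ts => .cons (Iso.refl t) (IsoList.refl ts)
end

mutual
theorem Iso.symm : ∀ {a b : RTree}, Iso a b → Iso b a
  | _, _, .node c c' l hp hl => by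
    obtain ⟨m, hm, hmc⟩ := List.perm_comp_forall₂ hp.symm (isoList_iff_forall₂.1 (IsoList.symm hl))
    exact .node c' c m hmc (isoList_iff_forall₂.2 hm)
theorem IsoList.symm : ∀ {l l' : List RTree}, IsoList l l' → IsoList l' l
  | _, _, .nil => .nil
  | _, _, .cons h hs => .cons (Iso.symm h) (IsoList.symm hs)
end

mutual
theorem Iso.trans : ∀ {a b c : RTree}, Iso a b → Iso b c → Iso a c
  | _, _, _, .node ca cb l₁ hp₁ hl₁, h₂ => by
    obtain ⟨_, _, l₂, hp₂, hl₂⟩ := h₂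
    obtain ⟨m, hm, hmp⟩ := List.perm_comp_forall₂ hp₁ (isoList_iff_forall₂.1 hl₂)
    exact .node _ _ m (hmp.trans hp₂) (IsoList.trans hl₁ (isoList_iff_forall₂.2 hm))
theorem IsoList.trans : ∀ {l₁ l₂ l₃ : List RTree}, IsoList l₁ l₂ → IsoList l₂ l₃ → IsoList l₁ l₃
  | _, _, _, .nil, .nil => .nil
  | _, _, _, .cons h hs, .cons h' hs' => .cons (Iso.trans h h') (IsoList.trans hs hs')
end

theorem sizeList_eq_sum : ∀ c : List RTree, sizeList c = (c.map size).sum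
  | [] => rfl
  | t :: ts => by rw [sizeList, sizeList_eq_sum ts, List.map_cons, List.sum_cons]

mutual
theorem Iso.size_eq : ∀ {a b : RTree}, Iso a b → a.size = b.size
  | _, _, .node c c' l hp hl => by
    rw [size, size, IsoList.sizeList_eq hl, sizeList_eq_sum, sizeList_eq_sum, (hp.map size).sum_eq]
theorem IsoList.sizeList_eq : ∀ {l l' : List RTree}, IsoList l l' → sizeList l = sizeList l'
  | _, _, .nil => rfl
  | _, _, .cons h hs => by rw [sizeList, sizeList, Iso.size_eq h, IsoList.sizeList_eq hs]
end

instance isoSetoid : Setoid RTree := ⟨Iso, Iso.refl, Iso.symm, Iso.trans⟩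

theorem iso_node_iff {c c' : List RTree} :
    Iso (.node c) (.node c') ↔ Relation.Comp (List.Forall₂ Iso) List.Perm c c' := by
  constructor
  · rintro ⟨_, _, l, hp, hl⟩
    exact ⟨l, isoList_iff_forall₂.1 hl, hp⟩
  · rintro ⟨l, hl, hp⟩
    exact .node c c' l hp (isoList_iff_forall₂.2 hl)

theorem size_lt_size_node_of_mem {c : List RTree} {t : RTree} (h : t ∈ c) :
    t.size < (node c).size := by
  have : t.size ≤ sizeList c := by
    rw [sizeList_eq_sum]; exact List.le_sum_of_mem (List.mem_map_of_mem h)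
  rw [size]; omega

end RTree

open RTree

abbrev UTree := Quotient RTree.isoSetoid

namespace UTree

def size : UTree → ℕ := Quotient.lift RTree.size fun _ _ => Iso.size_eq

@[simp]
theorem size_mk (t : RTree) : size ⟦t⟧ = t.size := rfl

theorem map_mk_eq_map_mk_iff {c l : List RTree} :
    c.map (Quotient.mk isoSetoid) = l.map (Quotient.mk isoSetoid) ↔ List.Forall₂ Iso c l := by
  rw [← List.forall₂_eq_eq_eq, List.forall₂_map_left_iff, List.forall₂_map_right_iff]
  exact ⟨(·.imp fun _ _ => Quotient.exact), (·.imp fun _ _ => Quotient.sound)⟩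

def children : UTree → Multiset UTree :=
  Quotient.lift (fun ⟨c⟩ => (c.map (Quotient.mk isoSetoid) : Multiset UTree)) fun ⟨c⟩ ⟨c'⟩ h => by
    obtain ⟨l, hl, hp⟩ := iso_node_iff.1 h
    dsimp only
    rw [map_mk_eq_map_mk_iff.2 hl]
    exact Multiset.coe_eq_coe.2 (hp.map _)

@[simp]
theorem children_mk (c : List RTree) :
    children (⟦.node c⟧) = (c.map (Quotient.mk isoSetoid) : Multiset UTree) := rfl

theorem children_injective : Function.Injective children := by
  intro q q' h
  induction q using Quotient.inductionOn with | h t => ?_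
  induction q' using Quotient.inductionOn with | h t' => ?_
  obtain ⟨c⟩ := t
  obtain ⟨c'⟩ := t'
  rw [children_mk, children_mk, Multiset.coe_eq_coe] at h
  obtain ⟨l, hl, hp⟩ := (congrFun₂ (List.eq_map_comp_perm _) _ _).mpr h
  exact Quotient.sound (iso_node_iff.2 ⟨l, map_mk_eq_map_mk_iff.1 hl, hp⟩)

theorem children_surjective : Function.Surjective children := fun m =>
  ⟨⟦.node (m.toList.map Quotient.out)⟧, by simp [Function.comp_def]⟩

noncomputable def childrenEquiv : UTree ≃ Multiset UTree :=
  .ofBijective children ⟨children_injective, children_surjective⟩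

theorem size_eq_one_add_sum_children (q : UTree) : q.size = 1 + (q.children.map size).sum := by
  induction q using Quotient.inductionOn with | h t => ?_
  obtain ⟨c⟩ := t
  simp [RTree.size, sizeList_eq_sum, Function.comp_def]

theorem mem_children_mk {c : List RTree} {r : UTree} :
    r ∈ children (⟦.node c⟧) ↔ ∃ t ∈ c, ⟦t⟧ = r := by
  simp

theorem size_lt_of_mem_children {q r : UTree} (h : r ∈ q.children) : r.size < q.size := by
  induction q using Quotient.inductionOn with | h t => ?_
  obtain ⟨c⟩ := t
  obtain ⟨t, ht, rfl⟩ := mem_children_mk.1 h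
  exact size_lt_size_node_of_mem ht

end UTree

namespace HasMaxLimb

theorem node_iff {c : List RTree} {L : RTree} :
    HasMaxLimb (.node c) L ↔ Iso (.node c) L ∨ ∃ t ∈ c, HasMaxLimb t L := by
  constructor
  · rintro (⟨_, _, h⟩ | ⟨_, t, _, ht, h⟩)
    exacts [.inl h, .inr ⟨t, ht, h⟩]
  · rintro (h | ⟨t, ht, h⟩)
    exacts [.here _ _ h, .child _ t _ ht h]

theorem size_le {t L : RTree} (h : HasMaxLimb t L) : L.size ≤ t.size := by
  induction h with
  | here t L h => exact h.size_eq.ge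
  | child c t L ht _ ih => exact ih.trans (size_lt_size_node_of_mem ht).le

theorem of_iso {t t' L : RTree} (h : HasMaxLimb t L) (ht : Iso t t') : HasMaxLimb t' L := by
  induction h generalizing t' with
  | here t L h => exact .here t' L (ht.symm.trans h)
  | child c t L hmem _ ih =>
    obtain ⟨c'⟩ := t'
    have hq : (⟦.node c⟧ : UTree) = ⟦.node c'⟧ := Quotient.sound ht
    have hmem' : (⟦t⟧ : UTree) ∈ UTree.children (⟦.node c'⟧) :=
      hq ▸ UTree.mem_children_mk.2 ⟨t, hmem, rfl⟩
    obtain ⟨t', ht', htt'⟩ := UTree.mem_children_mk.1 hmem'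
    exact .child c' t' L ht' (ih (Quotient.exact htt'.symm))

end HasMaxLimb

namespace UTree

def Avoids (L : RTree) : UTree → Prop :=
  Quotient.lift (fun t => ¬ HasMaxLimb t L) fun _ _ h =>
    propext (not_congr ⟨(·.of_iso h), (·.of_iso (Iso.symm h))⟩)

@[simp]
theorem avoids_mk {L t : RTree} : Avoids L ⟦t⟧ ↔ ¬ HasMaxLimb t L := Iff.rfl

theorem avoids_iff {L : RTree} {q : UTree} :
    q.Avoids L ↔ q ≠ ⟦L⟧ ∧ ∀ r ∈ q.children, r.Avoids L := by
  induction q using Quotient.inductionOn with | h t => ?_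
  obtain ⟨c⟩ := t
  simp only [avoids_mk, HasMaxLimb.node_iff, not_or, not_exists, not_and, ne_eq, Quotient.eq,
    mem_children_mk, forall_exists_index, and_imp, forall_apply_eq_imp_iff₂]
  rfl

end UTree

section FiberEquiv

universe u

variable {α β : Type u}

def multisetEquivOfFiberEquiv {f : α → ℕ} {g : β → ℕ}
    (e : ∀ k, {a // f a = k} ≃ {b // g b = k}) (P : ℕ → Prop) :
    {s : Multiset α // P (s.map f).sum} ≃ {s : Multiset β // P (s.map g).sum} :=
  (Functor.mapEquiv Multiset (Equiv.ofFiberEquiv e)).subtypeEquiv fun s => by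
    simp only [Functor.mapEquiv_apply, Multiset.fmap_def, Multiset.map_map, Function.comp_def,
      Equiv.ofFiberEquiv_map]

theorem nonempty_fiber_equiv_of_lt (w : α → ℕ) {p p' : α → Prop} (n : ℕ)
    (h : ∀ k < n, Nonempty ({a // w a = k ∧ p a} ≃ {a // w a = k ∧ p' a})) (k : ℕ) :
    Nonempty ({x : {a // p a ∧ w a < n} // w x = k} ≃ {x : {a // p' a ∧ w a < n} // w x = k}) := by
  by_cases hk : k < n
  · have fiber (q : α → Prop) : {x : {a // q a ∧ w a < n} // w x = k} ≃ {a // w a = k ∧ q a} :=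
      (Equiv.subtypeSubtypeEquivSubtypeInter _ (w · = k)).trans <| Equiv.subtypeEquivRight
        fun a => ⟨fun ⟨⟨hq, _⟩, hw⟩ => ⟨hw, hq⟩, fun ⟨hw, hq⟩ => ⟨⟨hq, hw ▸ hk⟩, hw⟩⟩
    obtain ⟨e⟩ := h k hk
    exact ⟨(fiber p).trans (e.trans (fiber p').symm)⟩
  · have (q : α → Prop) : IsEmpty {x : {a // q a ∧ w a < n} // w x = k} :=
      ⟨fun x => hk (x.2 ▸ x.1.2.2)⟩
    exact ⟨Equiv.equivOfIsEmpty _ _⟩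

end FiberEquiv

namespace UTree

theorem avoids_of_size_lt {L : RTree} {q : UTree} (h : q.size < L.size) : q.Avoids L := by
  induction q using Quotient.inductionOn with | h t => ?_
  exact fun ht => (ht.size_le.trans_lt h).false

noncomputable def childrenSubtypeEquiv (p : UTree → Prop) (n : ℕ) :
    {s : Multiset {r // p r ∧ r.size < n} // 1 + (s.map fun r => r.1.size).sum = n} ≃
      {q : UTree // q.size = n ∧ ∀ r ∈ q.children, p r} := by
  refine .ofBijective (fun s => ⟨childrenEquiv.symm (s.1.map (↑)), ?_⟩) ⟨?_, ?_⟩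
  · have hch : (childrenEquiv.symm (s.1.map (↑))).children = s.1.map (↑) :=
      childrenEquiv.apply_symm_apply _
    rw [size_eq_one_add_sum_children, hch, Multiset.map_map]
    refine ⟨s.2, fun r hr => ?_⟩
    obtain ⟨r', -, rfl⟩ := Multiset.mem_map.1 hr
    exact r'.2.1
  · intro s s' h
    exact Subtype.ext <| Multiset.map_injective Subtype.val_injective <|
      childrenEquiv.symm.injective (congrArg Subtype.val h)
  · rintro ⟨q, rfl, hp⟩
    obtain ⟨s, hs⟩ : ∃ s : Multiset {r // p r ∧ r.size < q.size}, s.map (↑) = q.children :=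
      CanLift.prf _ fun r hr => ⟨hp r hr, size_lt_of_mem_children hr⟩
    refine ⟨⟨s, ?_⟩, Subtype.ext ?_⟩
    · conv_rhs => rw [size_eq_one_add_sum_children, ← hs, Multiset.map_map]
      rfl
    · exact childrenEquiv.symm_apply_eq.2 hs

abbrev Avoiding (L : RTree) (n : ℕ) : Type := {q : UTree // q.size = n ∧ q.Avoids L}

abbrev ChildrenAvoiding (L : RTree) (n : ℕ) : Type :=
  {q : UTree // q.size = n ∧ ∀ r ∈ q.children, r.Avoids L}

def avoidingEquiv (L : RTree) (n : ℕ) :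
    Avoiding L n ≃ {q : ChildrenAvoiding L n // q.1 ≠ ⟦L⟧} :=
  (Equiv.subtypeEquivRight
    (q := fun q : UTree => (q.size = n ∧ ∀ r ∈ q.children, r.Avoids L) ∧ q ≠ ⟦L⟧)
    fun _ => by rw [avoids_iff]; tauto).trans (Equiv.subtypeSubtypeEquivSubtypeInter _ _).symm

def avoidingEquivOfNe {L : RTree} {n : ℕ} (hn : n ≠ L.size) :
    Avoiding L n ≃ ChildrenAvoiding L n :=
  (avoidingEquiv L n).trans <| Equiv.subtypeUnivEquiv fun q hq => hn (q.2.1.symm.trans (hq ▸ rfl))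

noncomputable def optionAvoidingEquiv {L : RTree} {n : ℕ} (hn : n = L.size) :
    Option (Avoiding L n) ≃ ChildrenAvoiding L n :=
  let treeL : ChildrenAvoiding L n :=
    ⟨⟦L⟧, hn.symm, fun _ hr => avoids_of_size_lt (size_lt_of_mem_children hr)⟩
  haveI := Classical.decEq (ChildrenAvoiding L n)
  (Equiv.optionCongr <| (avoidingEquiv L n).trans <|
    Equiv.subtypeEquivRight fun _ => not_congr (Subtype.ext_iff (a2 := treeL)).symm).trans
    (Equiv.optionSubtypeNe treeL)

theorem nonempty_avoiding_equiv_of_childrenAvoiding {L₁ L₂ : RTree} {n : ℕ}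
    (hsize : L₁.size = L₂.size) (e : ChildrenAvoiding L₁ n ≃ ChildrenAvoiding L₂ n) :
    Nonempty (Avoiding L₁ n ≃ Avoiding L₂ n) := by
  by_cases hn : n = L₁.size
  · exact ⟨Equiv.removeNone <| (optionAvoidingEquiv hn).trans <|
      e.trans (optionAvoidingEquiv (hn.trans hsize)).symm⟩
  · exact ⟨(avoidingEquivOfNe hn).trans <| e.trans (avoidingEquivOfNe (hsize ▸ hn)).symm⟩

theorem nonempty_avoiding_equiv {L₁ L₂ : RTree} (hsize : L₁.size = L₂.size) (n : ℕ) :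
    Nonempty (Avoiding L₁ n ≃ Avoiding L₂ n) := by
  induction n using Nat.strong_induction_on with | _ n ih => ?_
  have hfiber := nonempty_fiber_equiv_of_lt size n ih
  exact nonempty_avoiding_equiv_of_childrenAvoiding hsize <|
    (childrenSubtypeEquiv _ n).symm.trans <|
      (multisetEquivOfFiberEquiv (fun k => (hfiber k).some) (1 + · = n)).trans
        (childrenSubtypeEquiv _ n)

def quotEquivAvoiding (L : RTree) (n : ℕ) :
    Quot (fun a b : {t : RTree // t.size = n ∧ ¬ HasMaxLimb t L} => Iso a.1 b.1) ≃ Avoiding L n :=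
  -- `Quotient (Setoid.comap Subtype.val isoSetoid)` unfolds to the `Quot` on the left.
  (Equiv.subtypeQuotientEquivQuotientSubtype _ (s₂ := Setoid.comap Subtype.val isoSetoid)
    (fun q : UTree => q.size = n ∧ q.Avoids L)
    (fun _ => Iff.rfl) fun _ _ => Iff.rfl).symm

end UTree

/-- If `L₁` and `L₂` are two distinct rooted trees with `ℓ` vertices, then for every
`n` the number of `n`-vertex rooted trees (up to isomorphism) without `L₁` as a
maximal limb equals the number of `n`-vertex rooted trees without `L₂` as a maximal
limb. -/
theorem stmt19 (ℓ n : ℕ) (L₁ L₂ : RTree) (h1 : L₁.size = ℓ) (h2 : L₂.size = ℓ)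
    (hne : ¬ RTree.Iso L₁ L₂) :
    Nat.card (Quot (fun a b : {t : RTree // t.size = n ∧ ¬ HasMaxLimb t L₁} =>
      RTree.Iso a.1 b.1)) =
    Nat.card (Quot (fun a b : {t : RTree // t.size = n ∧ ¬ HasMaxLimb t L₂} =>
      RTree.Iso a.1 b.1)) := by
  obtain ⟨e⟩ := UTree.nonempty_avoiding_equiv (h1.trans h2.symm) n
  exact Nat.card_congr <| (UTree.quotEquivAvoiding L₁ n).trans <|
    e.trans (UTree.quotEquivAvoiding L₂ n).symm
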